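/- arXiv:1406.2527 — 2 statements merged into one kernel-verified Lean document; each statement's English description precedes it below -/
import Mathlib

section
/- Let A and B be finite-dimensional complex C*-algebras with faithful tracial states τ_A, τ_B, and let f : A → B be a unital linear bijection with τ_B(f(x)^n) = τ_A(x^n) for all x ∈ A and all n ≥ 1. Then f preserves spectra: sp(f(x)) = sp(x) for all x ∈ A. -/
/-!
Let `P` annihilate both `x` and `f x`. For each `μ`, the Chinese remainder theorem gives a
polynomial `E` with `E ≡ 1` modulo a power of `X - μ` and `E ≡ 0` modulo the rest of `P`; then
`E(x)` is an idempotent which vanishes exactly when `μ ∉ sp x`, and likewise for `f x`. Since both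
traces are unital, the traces of all powers of `x` and `f x` agree, so `τB (E (f x)) = τA (E x)`.
Finally a faithful trace vanishes on no nonzero idempotent `e`, because `e` has the same trace as
the projection `e (e + e⋆ - 1)⁻¹` onto its range.
-/

open Polynomial

section PolynomialIdempotent

variable {K A : Type*} [CommRing K] [Ring A] [Algebra K A] {x : A} {P p E : K[X]}

theorem isIdempotentElem_aeval_of_dvd (hx : aeval x P = 0) (hPE : P ∣ E * p)
    (hE : p ∣ E - 1) : IsIdempotentElem (aeval x E) := by
  have hdvd : P ∣ E * E - E := by
    obtain ⟨w, hw⟩ := hE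
    exact hPE.trans ⟨w, by linear_combination E * hw⟩
  obtain ⟨q, hq⟩ := hdvd
  have := congrArg (aeval x) hq
  rwa [map_sub, map_mul, map_mul, hx, zero_mul, sub_eq_zero] at this

theorem aeval_eq_zero_iff_isUnit_of_dvd (hx : aeval x P = 0) (hPE : P ∣ E * p)
    (hE : p ∣ E - 1) : aeval x E = 0 ↔ IsUnit (aeval x p) := by
  obtain ⟨w, hw⟩ := hE
  constructor
  · intro h0
    have hinv : aeval x (p * -w) = 1 := by
      rw [mul_neg, ← hw, map_neg, map_sub, h0, map_one, zero_sub, neg_neg]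
    refine isUnit_iff_exists.2 ⟨aeval x (-w), ?_, ?_⟩
    · rwa [← map_mul]
    · rwa [← map_mul, mul_comm]
  · intro hu
    obtain ⟨q, hq⟩ := hPE
    have : aeval x E * aeval x p = 0 := by rw [← map_mul, hq, map_mul, hx, zero_mul]
    exact hu.mul_left_eq_zero.1 this

end PolynomialIdempotent

theorem mem_spectrum_iff_aeval_ne_zero {K A : Type*} [Field K] [Ring A] [Algebra K A] {x : A}
    {P E : K[X]} {μ : K} {m : ℕ} (hm : m ≠ 0) (hx : aeval x P = 0)
    (hPE : P ∣ E * (X - C μ) ^ m) (hE : (X - C μ) ^ m ∣ E - 1) :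
    μ ∈ spectrum K x ↔ aeval x E ≠ 0 := by
  rw [Ne, aeval_eq_zero_iff_isUnit_of_dvd hx hPE hE, map_pow, isUnit_pow_iff hm, map_sub,
    aeval_X, aeval_C, ← IsUnit.neg_iff, neg_sub, spectrum.mem_iff]

theorem Polynomial.exists_dvd_mul_X_sub_C_pow_and_dvd_sub_one {K : Type*} [Field K] {P : K[X]}
    (hP : P ≠ 0) (μ : K) :
    ∃ m ≠ 0, ∃ E : K[X], P ∣ E * (X - C μ) ^ m ∧ (X - C μ) ^ m ∣ E - 1 := by
  obtain ⟨Q, hPQ, hQ⟩ := P.exists_eq_pow_rootMultiplicity_mul_and_not_dvd hP μ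
  set k := P.rootMultiplicity μ
  obtain ⟨u, v, huv⟩ :=
    ((irreducible_X_sub_C μ).coprime_iff_not_dvd.2 hQ).pow_left (m := k + 1)
  refine ⟨k + 1, k.succ_ne_zero, v * Q, ⟨v * (X - C μ), ?_⟩, ⟨-u, by linear_combination huv⟩⟩
  rw [hPQ]; ring

theorem trace_aeval_eq_of_trace_pow_eq {R A B M : Type*} [CommSemiring R] [Semiring A]
    [Algebra R A] [Semiring B] [Algebra R B] [AddCommMonoid M] [Module R M]
    (τA : A →ₗ[R] M) (τB : B →ₗ[R] M) {x : A} {y : B} (h : ∀ n, τB (y ^ n) = τA (x ^ n))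
    (g : R[X]) : τB (aeval y g) = τA (aeval x g) := by
  simp only [aeval_eq_sum_range, map_sum, map_smul, h]

theorem exists_isStarProjection_of_isIdempotentElem {R : Type*} [Ring R] [StarRing R] {e : R}
    (he : IsIdempotentElem e) (hz : IsUnit (e + star e - 1)) :
    ∃ p, IsStarProjection p ∧ p * e = e ∧ e * p = p := by
  obtain ⟨z, hz⟩ := hz
  have hs := he.star
  have hze : SemiconjBy (z : R) e (star e) := by
    rw [SemiconjBy, hz]; linear_combination (norm := noncomm_ring) he.eq - hs.eq
  have hzs : SemiconjBy (z : R) (star e) e := by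
    rw [SemiconjBy, hz]; linear_combination (norm := noncomm_ring) hs.eq - he.eq
  have hzi : star (↑z⁻¹ : R) = ↑z⁻¹ := by
    rw [← Units.coe_star_inv, show star z = z from Units.ext (by simp [hz, add_comm])]
  have hez : e * z = e * star e := by
    rw [hz]; linear_combination (norm := noncomm_ring) he.eq
  have hpe : e * ↑z⁻¹ * e = e := by
    rw [mul_assoc, hzs.units_inv_symm_left.eq, ← mul_assoc, ← hez, mul_assoc, z.mul_inv,
      mul_one]
  refine ⟨e * ↑z⁻¹, ⟨?_, ?_⟩, hpe, by rw [← mul_assoc, he.eq]⟩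
  · rw [IsIdempotentElem, ← mul_assoc, hpe]
  · rw [IsSelfAdjoint, star_mul, hzi, hze.units_inv_symm_left.eq]

section CStarAlgebra

variable {A : Type*} [CStarAlgebra A]

theorem isUnit_one_add_star_mul_self (a : A) : IsUnit (1 + star a * a) := by
  by_contra h
  have hmem : (-1 : ℝ) ∈ spectrum ℝ (star a * a) := by
    rwa [spectrum.mem_iff, show algebraMap ℝ A (-1) - star a * a = -(1 + star a * a) by
      rw [map_neg, map_one]; abel, IsUnit.neg_iff]
  linarith [spectrum_star_mul_self_nonneg (-1 : ℝ) hmem]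

theorem isUnit_add_star_sub_one_of_isIdempotentElem {e : A} (he : IsIdempotentElem e) :
    IsUnit (e + star e - 1) := by
  have hsq : (e + star e - 1) ^ 2 = 1 + star (star e - e) * (star e - e) := by
    rw [star_sub, star_star]
    linear_combination (norm := noncomm_ring) 2 * he.eq + 2 * he.star.eq
  rw [← isUnit_pow_iff two_ne_zero, hsq]
  exact isUnit_one_add_star_mul_self _

theorem trace_ne_zero_iff_of_isIdempotentElem (τ : A →ₗ[ℂ] ℂ)
    (htr : ∀ x y : A, τ (x * y) = τ (y * x)) (hfaith : ∀ x : A, τ (star x * x) = 0 → x = 0)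
    {e : A} (he : IsIdempotentElem e) : τ e ≠ 0 ↔ e ≠ 0 := by
  refine ⟨fun hτ he0 => hτ (by rw [he0, map_zero]), fun he0 hτ => he0 ?_⟩
  obtain ⟨p, hp, hpe, hep⟩ := exists_isStarProjection_of_isIdempotentElem he
    (isUnit_add_star_sub_one_of_isIdempotentElem he)
  have hτp : τ (star p * p) = 0 := by
    rw [hp.isSelfAdjoint.star_eq, hp.isIdempotentElem.eq, ← hep, htr, hpe, hτ]
  rw [← hpe, hfaith p hτp, zero_mul]

end CStarAlgebra

open ComplexOrder

theorem spectrum_preserved_of_trace_powers_general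
    {A B : Type*}
    [NormedRing A] [StarRing A] [CStarRing A] [NormedAlgebra ℂ A]
    [StarModule ℂ A] [FiniteDimensional ℂ A]
    [NormedRing B] [StarRing B] [CStarRing B] [NormedAlgebra ℂ B]
    [StarModule ℂ B] [FiniteDimensional ℂ B]
    (τA : A →ₗ[ℂ] ℂ) (τB : B →ₗ[ℂ] ℂ)
    -- τA is a faithful tracial state
    (hA1 : τA 1 = 1)
    (hAtr : ∀ x y : A, τA (x * y) = τA (y * x))
    (hAfaith : ∀ x : A, τA (star x * x) = 0 → x = 0)
    -- τB is a faithful tracial state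
    (hB1 : τB 1 = 1)
    (hBtr : ∀ x y : B, τB (x * y) = τB (y * x))
    (hBfaith : ∀ x : B, τB (star x * x) = 0 → x = 0)
    -- f is a unital linear bijection matching traces of powers
    (f : A ≃ₗ[ℂ] B)
    (hpow : ∀ (x : A) (n : ℕ), 1 ≤ n → τB ((f x) ^ n) = τA (x ^ n)) :
    ∀ x : A, spectrum ℂ (f x) = spectrum ℂ x := by
  have := FiniteDimensional.complete ℂ A
  have := FiniteDimensional.complete ℂ B
  let : CStarAlgebra A := {}
  let : CStarAlgebra B := {}
  intro x
  have htrace (g : ℂ[X]) : τB (aeval (f x) g) = τA (aeval x g) := by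
    refine trace_aeval_eq_of_trace_pow_eq τA τB (fun n => ?_) g
    rcases n with _ | n
    · rw [pow_zero, pow_zero, hA1, hB1]
    · exact hpow x (n + 1) n.succ_pos
  set P := minpoly ℂ x * minpoly ℂ (f x)
  have hP : P ≠ 0 := mul_ne_zero (minpoly.ne_zero (Algebra.IsIntegral.isIntegral x))
    (minpoly.ne_zero (Algebra.IsIntegral.isIntegral (f x)))
  have hPx : aeval x P = 0 := by simp [P]
  have hPy : aeval (f x) P = 0 := by simp [P]
  ext μ
  obtain ⟨m, hm, E, hPE, hE⟩ := exists_dvd_mul_X_sub_C_pow_and_dvd_sub_one hP μ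
  rw [mem_spectrum_iff_aeval_ne_zero hm hPy hPE hE, mem_spectrum_iff_aeval_ne_zero hm hPx hPE hE,
    ← trace_ne_zero_iff_of_isIdempotentElem τB hBtr hBfaith
      (isIdempotentElem_aeval_of_dvd hPy hPE hE), htrace,
    trace_ne_zero_iff_of_isIdempotentElem τA hAtr hAfaith
      (isIdempotentElem_aeval_of_dvd hPx hPE hE)]

/-- A unital linear bijection between finite-dimensional C*-algebras, with
faithful tracial states, that matches all traces of powers, preserves
spectra. -/
theorem spectrum_preserved_of_trace_powers
    {A B : Type*}
    [NormedRing A] [StarRing A] [CStarRing A] [NormedAlgebra ℂ A]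
    [StarModule ℂ A] [FiniteDimensional ℂ A]
    [NormedRing B] [StarRing B] [CStarRing B] [NormedAlgebra ℂ B]
    [StarModule ℂ B] [FiniteDimensional ℂ B]
    (τA : A →ₗ[ℂ] ℂ) (τB : B →ₗ[ℂ] ℂ)
    -- τA is a faithful tracial state
    (hA1 : τA 1 = 1)
    (hAtr : ∀ x y : A, τA (x * y) = τA (y * x))
    (hApos : ∀ x : A, 0 ≤ τA (star x * x))
    (hAfaith : ∀ x : A, τA (star x * x) = 0 → x = 0)
    -- τB is a faithful tracial state
    (hB1 : τB 1 = 1)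
    (hBtr : ∀ x y : B, τB (x * y) = τB (y * x))
    (hBpos : ∀ x : B, 0 ≤ τB (star x * x))
    (hBfaith : ∀ x : B, τB (star x * x) = 0 → x = 0)
    -- f is a unital linear bijection matching traces of powers
    (f : A ≃ₗ[ℂ] B) (hf1 : f 1 = 1)
    (hpow : ∀ (x : A) (n : ℕ), 1 ≤ n → τB ((f x) ^ n) = τA (x ^ n)) :
    ∀ x : A, spectrum ℂ (f x) = spectrum ℂ x :=
  spectrum_preserved_of_trace_powers_general τA τB hA1 hAtr hAfaith hB1 hBtr hBfaith f hpow
end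

section
/- Let A and B be Hopf algebras over a field k, and f : A → B a unital counit-preserving algebra map. Suppose A = S₁ + S₂ as a vector space, where S₁, S₂ are subcoalgebras, f restricted to S₁ is comultiplicative, f restricted to S₂ is anti-comultiplicative, and the antipode of B is involutive. Then f intertwines antipodes: S_B ∘ f = f ∘ S_A. -/
/-!
In the convolution monoid `Hom_k(A, B)`, `f ∘ S_A` is a right inverse of `f` because `f` is an
algebra map, and `S_B ∘ f` is a left inverse of `f`: on `S₁` this is the antipode identity
`∑ S(b₁) b₂ = ε(b)` for `b = f w`, and on `S₂`, where the coproduct of `f w` comes flipped, it is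
the flipped identity `∑ S(b₂) b₁ = ε(b)`, obtained from the former by applying the involutive
anti-homomorphism `S_B`. Left and right inverses in a monoid coincide.
-/

open Coalgebra HopfAlgebra TensorProduct WithConv

namespace HopfAlgebra

variable {R B : Type*} [CommSemiring R] [Semiring B] [HopfAlgebra R B]

lemma antipode_algebraMap (r : R) : antipode R (algebraMap R B r) = algebraMap R B r := by
  rw [Algebra.algebraMap_eq_smul_one, map_smul, antipode_one]

lemma sum_antipode_right_mul_left_eq_algebraMap_counit
    (hS : Function.Involutive (antipode R (A := B))) {b : B} {ι : Type*} (repr : Repr R b ι) :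
    ∑ i ∈ repr.index, antipode R (repr.right i) * repr.left i = algebraMap R B (counit b) := by
  apply hS.injective
  simp only [map_sum, antipode_mul_antidistrib, hS _, antipode_algebraMap,
    sum_antipode_mul_eq_algebraMap_counit repr]

end HopfAlgebra

namespace LinearMap

variable {R A B : Type*} [CommSemiring R] [AddCommMonoid A] [Module R A] [Coalgebra R A]
  [Semiring B] [HopfAlgebra R B]

lemma antipode_comp_convMul_apply_of_comul_map (f : A →ₗ[R] B) {a : A}
    (hε : counit (R := R) (f a) = counit a) (hδ : comul (R := R) (f a) = map f f (comul a)) :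
    (toConv (antipode R ∘ₗ f) * toConv f) a = algebraMap R B (counit a) := by
  let r := ℛ R a
  let rf : Repr R (f a) (A × A) :=
    { index := r.index, left := f ∘ r.left, right := f ∘ r.right
      eq := by simp [hδ, ← r.eq, map_sum] }
  rw [r.convMul_apply, ← hε, ← sum_antipode_mul_eq_algebraMap_counit rf]
  rfl

lemma antipode_comp_convMul_apply_of_comul_map_comm
    (hS : Function.Involutive (antipode R (A := B))) (f : A →ₗ[R] B) {a : A}
    (hε : counit (R := R) (f a) = counit a)
    (hδ : comul (R := R) (f a) = TensorProduct.comm R B B (map f f (comul a))) :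
    (toConv (antipode R ∘ₗ f) * toConv f) a = algebraMap R B (counit a) := by
  let r := ℛ R a
  let rf : Repr R (f a) (A × A) :=
    { index := r.index, left := f ∘ r.right, right := f ∘ r.left
      eq := by simp [hδ, ← r.eq, map_sum] }
  rw [r.convMul_apply, ← hε, ← sum_antipode_right_mul_left_eq_algebraMap_counit hS rf]
  rfl

end LinearMap

namespace AlgHom

variable {R A B : Type*} [CommSemiring R] [Semiring A] [HopfAlgebra R A] [Semiring B] [Algebra R B]

lemma toConv_mul_toConv_comp_antipode (f : A →ₐ[R] B) :
    toConv f.toLinearMap * toConv (f.toLinearMap ∘ₗ antipode R) = 1 := by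
  have h := LinearMap.algHom_comp_convMul_distrib f (toConv LinearMap.id) (toConv (antipode R))
  rw [ofConv_toConv, ofConv_toConv, LinearMap.comp_id, LinearMap.id_mul_antipode] at h
  apply WithConv.ofConv_injective
  rw [← h]
  ext
  simp

end AlgHom

theorem intertwines_antipodes_of_piecewise_comultiplicative_general
    {k A B : Type*} [Field k] [Ring A] [Ring B]
    [HopfAlgebra k A] [HopfAlgebra k B]
    (f : A →ₐ[k] B)
    (hcounit : ∀ a : A, Coalgebra.counit (R := k) (f a)
      = Coalgebra.counit (R := k) a)
    (S₁ S₂ : Submodule k A)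
    (hspan : S₁ ⊔ S₂ = ⊤)
    -- `f` is comultiplicative on `S₁`
    (hco : ∀ w ∈ S₁, Coalgebra.comul (R := k) (f w)
      = (TensorProduct.map f.toLinearMap f.toLinearMap)
          (Coalgebra.comul (R := k) w))
    -- `f` is anti-comultiplicative on `S₂`
    (hanti : ∀ w ∈ S₂, Coalgebra.comul (R := k) (f w)
      = (TensorProduct.comm k B B)
          ((TensorProduct.map f.toLinearMap f.toLinearMap)
            (Coalgebra.comul (R := k) w)))
    -- the antipode of `B` is involutive
    (hSB : ∀ b : B, HopfAlgebra.antipode (R := k)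
      (HopfAlgebra.antipode (R := k) b) = b) :
    ∀ a : A, HopfAlgebra.antipode (R := k) (f a)
      = f (HopfAlgebra.antipode (R := k) a) := by
  have hspan' : Submodule.span k (S₁ ∪ S₂ : Set A) = ⊤ := by
    rw [Submodule.span_union, Submodule.span_eq, Submodule.span_eq, hspan]
  have hleft : toConv (antipode k ∘ₗ f.toLinearMap) * toConv f.toLinearMap = 1 := by
    apply WithConv.ofConv_injective
    refine LinearMap.ext_on hspan' ?_
    rintro w (hw | hw)
    · exact LinearMap.antipode_comp_convMul_apply_of_comul_map _ (hcounit w) (hco w hw)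
    · exact LinearMap.antipode_comp_convMul_apply_of_comul_map_comm hSB _ (hcounit w)
        (hanti w hw)
  intro a
  exact congr($(left_inv_eq_right_inv hleft f.toConv_mul_toConv_comp_antipode) a)

/-- Let `A`, `B` be Hopf algebras over a field `k` and `f : A → B` a unital
counit-preserving algebra map.  If `A = S₁ + S₂` with `S₁`, `S₂`
subcoalgebras, `f` comultiplicative on `S₁` and anti-comultiplicative on
`S₂`, and the antipode of `B` is involutive, then `f` intertwines the
antipodes: `S_B ∘ f = f ∘ S_A`. -/
theorem intertwines_antipodes_of_piecewise_comultiplicative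
    {k A B : Type*} [Field k] [Ring A] [Ring B]
    [HopfAlgebra k A] [HopfAlgebra k B]
    (f : A →ₐ[k] B)
    (hcounit : ∀ a : A, Coalgebra.counit (R := k) (f a)
      = Coalgebra.counit (R := k) a)
    (S₁ S₂ : Submodule k A)
    (hspan : S₁ ⊔ S₂ = ⊤)
    -- `S₁` and `S₂` are subcoalgebras of `A`
    (hsub₁ : ∀ w ∈ S₁, Coalgebra.comul (R := k) w ∈
      LinearMap.range (TensorProduct.map S₁.subtype S₁.subtype))
    (hsub₂ : ∀ w ∈ S₂, Coalgebra.comul (R := k) w ∈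
      LinearMap.range (TensorProduct.map S₂.subtype S₂.subtype))
    -- `f` is comultiplicative on `S₁`
    (hco : ∀ w ∈ S₁, Coalgebra.comul (R := k) (f w)
      = (TensorProduct.map f.toLinearMap f.toLinearMap)
          (Coalgebra.comul (R := k) w))
    -- `f` is anti-comultiplicative on `S₂`
    (hanti : ∀ w ∈ S₂, Coalgebra.comul (R := k) (f w)
      = (TensorProduct.comm k B B)
          ((TensorProduct.map f.toLinearMap f.toLinearMap)
            (Coalgebra.comul (R := k) w)))
    -- the antipode of `B` is involutive
    (hSB : ∀ b : B, HopfAlgebra.antipode (R := k)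
      (HopfAlgebra.antipode (R := k) b) = b) :
    ∀ a : A, HopfAlgebra.antipode (R := k) (f a)
      = f (HopfAlgebra.antipode (R := k) a) :=
  intertwines_antipodes_of_piecewise_comultiplicative_general f hcounit S₁ S₂ hspan hco hanti hSB
end
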